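/- Let G be a bipartite graph with parts A and B, |A| = |B| = m, and let r be a nonnegative integer. Then G contains an r-factor (an r-regular spanning subgraph) if and only if for all X ⊆ A and Y ⊆ B, the number of edges between X and Y satisfies e_G(X,Y) ≥ r(|X| + |Y| - m). -/

import Mathlib

open Finset

section Aux
variable {α β : Type*} [DecidableEq α] [DecidableEq β]

lemma count_rows (X : Finset α) (Y : Finset β) (P : α → β → Prop) [∀ a b, Decidable (P a b)] :
    ((X ×ˢ Y).filter (fun p => P p.1 p.2)).card
      = ∑ a ∈ X, (Y.filter (fun b => P a b)).card := by
  rw [Finset.card_eq_sum_card_fiberwise (f := fun p => p.1) (t := X)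
    (fun p hp => (Finset.mem_product.1 (Finset.mem_filter.1 hp).1).1)]
  refine Finset.sum_congr rfl fun a ha => ?_
  rw [← Finset.card_image_of_injective (Y.filter (fun b => P a b)) (Prod.mk_right_injective a)]
  congr 1
  ext ⟨x, y⟩
  simp only [Finset.mem_image, Finset.mem_filter, Finset.mem_product, Prod.mk.injEq]
  constructor
  · rintro ⟨⟨⟨hx, hy⟩, hP⟩, rfl⟩; exact ⟨y, ⟨hy, hP⟩, rfl, rfl⟩
  · rintro ⟨b, ⟨hb, hP⟩, rfl, rfl⟩; exact ⟨⟨⟨ha, hb⟩, hP⟩, rfl⟩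

lemma count_cols (X : Finset α) (Y : Finset β) (P : α → β → Prop) [∀ a b, Decidable (P a b)] :
    ((X ×ˢ Y).filter (fun p => P p.1 p.2)).card
      = ∑ b ∈ Y, (X.filter (fun a => P a b)).card := by
  rw [← count_rows Y X (fun b a => P a b)]
  apply Finset.card_nbij (fun p => p.swap)
  · intro p hp
    simp only [Finset.mem_coe, Finset.mem_filter, Finset.mem_product] at *
    exact ⟨⟨hp.1.2, hp.1.1⟩, hp.2⟩
  · intro p hp q hq h
    exact Prod.swap_injective h
  · intro p hp
    refine ⟨p.swap, ?_, Prod.swap_swap p⟩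
    simp only [Finset.mem_coe, Finset.mem_filter, Finset.mem_product] at *
    exact ⟨⟨hp.1.2, hp.1.1⟩, hp.2⟩

end Aux

section Gadget
variable {α β : Type*} [Fintype α] [Fintype β] [DecidableEq α] [DecidableEq β]
  (r : ℕ) (G : α → β → Prop) [∀ a b, Decidable (G a b)]

/-- neighborhoods in the auxiliary bipartite graph -/
def nbr : (α × Fin r) ⊕ {p : α × β // G p.1 p.2} →
    Finset ((β × Fin r) ⊕ {p : α × β // G p.1 p.2})
  | .inl (a, _) => (univ.filter (fun e : {p : α × β // G p.1 p.2} => e.1.1 = a)).image Sum.inr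
  | .inr e => insert (Sum.inr e)
      ((univ : Finset (Fin r)).image (fun j => Sum.inl (e.1.2, j)))

end Gadget

section Gadget
variable {α β : Type*} [Fintype α] [Fintype β] [DecidableEq α] [DecidableEq β]
  (r : ℕ) (G : α → β → Prop) [∀ a b, Decidable (G a b)]

lemma hall_cond (m : ℕ) (hβ : Fintype.card β = m)
    (hcond : ∀ (X : Finset α) (Y : Finset β),
      (r : ℤ) * (X.card + Y.card - m) ≤
        ((X ×ˢ Y).filter (fun p => G p.1 p.2)).card)
    (S : Finset ((α × Fin r) ⊕ {p : α × β // G p.1 p.2})) :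
    S.card ≤ (S.biUnion (nbr r G)).card := by
  classical
  set X : Finset α := univ.filter (fun a : α => ∃ i, Sum.inl (a, i) ∈ S) with hX
  set F : Finset {p : α × β // G p.1 p.2} := univ.filter (fun e : {p : α × β // G p.1 p.2} => Sum.inr e ∈ S) with hF
  set T : Finset β := F.image (fun e => e.1.2) with hT
  set δX : Finset {p : α × β // G p.1 p.2} := univ.filter (fun e : {p : α × β // G p.1 p.2} => e.1.1 ∈ X) with hδX
  set EXT : Finset {p : α × β // G p.1 p.2} := univ.filter (fun e : {p : α × β // G p.1 p.2} => e.1.1 ∈ X ∧ e.1.2 ∈ T) with hEXT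
  set EXTc : Finset {p : α × β // G p.1 p.2} := univ.filter (fun e : {p : α × β // G p.1 p.2} => e.1.1 ∈ X ∧ e.1.2 ∉ T) with hEXTc
  -- Step 1 : |S| ≤ r * |X| + |F|
  have h1 : S.card ≤ r * X.card + F.card := by
    have hsub : S ⊆ ((X ×ˢ (univ : Finset (Fin r))).image Sum.inl) ∪ (F.image Sum.inr) := by
      intro x hx
      rcases x with ⟨a, i⟩ | e
      · refine mem_union_left _ (mem_image.2 ⟨(a, i), ?_, rfl⟩)
        exact mem_product.2 ⟨mem_filter.2 ⟨mem_univ _, ⟨i, hx⟩⟩, mem_univ _⟩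
      · exact mem_union_right _ (mem_image.2 ⟨e, mem_filter.2 ⟨mem_univ _, hx⟩, rfl⟩)
    calc S.card ≤ _ := card_le_card hsub
      _ ≤ ((X ×ˢ (univ : Finset (Fin r))).image Sum.inl).card + (F.image Sum.inr).card :=
          card_union_le _ _
      _ = r * X.card + F.card := by
          rw [card_image_of_injective _ Sum.inl_injective,
            card_image_of_injective _ Sum.inr_injective, card_product, card_univ,
            Fintype.card_fin, Nat.mul_comm]
  -- Step 2 : lower bound for the neighborhood
  have h2 : ((δX ∪ F).image Sum.inr) ∪ ((T ×ˢ (univ : Finset (Fin r))).image Sum.inl)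
      ⊆ S.biUnion (nbr r G) := by
    intro y hy
    rcases mem_union.1 hy with hy | hy
    · obtain ⟨e, he, rfl⟩ := mem_image.1 hy
      rcases mem_union.1 he with he | he
      · obtain ⟨i, hi⟩ := (mem_filter.1 ((mem_filter.1 he).2)).2
        refine mem_biUnion.2 ⟨Sum.inl (e.1.1, i), hi, ?_⟩
        exact mem_image.2 ⟨e, mem_filter.2 ⟨mem_univ _, rfl⟩, rfl⟩
      · refine mem_biUnion.2 ⟨Sum.inr e, (mem_filter.1 he).2, ?_⟩
        exact mem_insert_self _ _
    · obtain ⟨⟨b, j⟩, hbj, rfl⟩ := mem_image.1 hy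
      obtain ⟨hb, -⟩ := mem_product.1 hbj
      obtain ⟨e, heF, heb⟩ := mem_image.1 hb
      refine mem_biUnion.2 ⟨Sum.inr e, (mem_filter.1 heF).2, ?_⟩
      exact mem_insert_of_mem (mem_image.2 ⟨j, mem_univ _, by rw [heb]⟩)
  have hdisj : Disjoint ((δX ∪ F).image Sum.inr)
      ((T ×ˢ (univ : Finset (Fin r))).image Sum.inl) := by
    rw [disjoint_left]
    rintro y hy1 hy2
    obtain ⟨e, -, rfl⟩ := mem_image.1 hy1
    obtain ⟨p, -, hp⟩ := mem_image.1 hy2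
    exact absurd hp (by simp)
  have h2' : (δX ∪ F).card + T.card * r ≤ (S.biUnion (nbr r G)).card := by
    calc (δX ∪ F).card + T.card * r
        = ((δX ∪ F).image Sum.inr).card + ((T ×ˢ (univ : Finset (Fin r))).image Sum.inl).card := by
          rw [card_image_of_injective _ Sum.inr_injective,
            card_image_of_injective _ Sum.inl_injective, card_product, card_univ,
            Fintype.card_fin]
      _ = (((δX ∪ F).image Sum.inr) ∪ ((T ×ˢ (univ : Finset (Fin r))).image Sum.inl)).card :=
          (card_union_of_disjoint hdisj).symm
      _ ≤ _ := card_le_card h2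
  -- Step 3 : arithmetic
  have e1 : (F \ δX).card + δX.card = (δX ∪ F).card := by
    rw [union_comm]; exact card_sdiff_add_card F δX
  have e2 : (F ∩ δX).card + (F \ δX).card = F.card := card_inter_add_card_sdiff F δX
  have e3 : (F ∩ δX).card ≤ EXT.card := by
    apply card_le_card
    intro e he
    obtain ⟨heF, heδ⟩ := mem_inter.1 he
    exact mem_filter.2 ⟨mem_univ _, (mem_filter.1 heδ).2,
      mem_image.2 ⟨e, heF, rfl⟩⟩
  have e4 : EXT.card + EXTc.card = δX.card := by
    rw [← card_union_of_disjoint (by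
      rw [disjoint_left]
      intro e h1'' h2''
      simp only [hEXT, hEXTc, mem_filter, mem_univ, true_and] at h1'' h2''
      exact h2''.2 h1''.2)]
    congr 1
    ext e
    simp only [hEXT, hEXTc, hδX, mem_union, mem_filter, mem_univ, true_and]
    tauto
  have e5 : EXTc.card = ((X ×ˢ Tᶜ).filter (fun p => G p.1 p.2)).card := by
    apply Finset.card_nbij (fun e => e.1)
    · intro e he
      obtain ⟨-, hX', hT'⟩ := mem_filter.1 he
      exact mem_filter.2 ⟨mem_product.2 ⟨hX', mem_compl.2 hT'⟩, e.2⟩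
    · intro e _ e' _ h
      exact Subtype.ext h
    · intro p hp
      obtain ⟨hm, hG⟩ := mem_filter.1 (mem_coe.1 hp)
      obtain ⟨hX', hT'⟩ := mem_product.1 hm
      exact ⟨⟨p, hG⟩, mem_coe.2 (mem_filter.2 ⟨mem_univ _, hX', mem_compl.1 hT'⟩), rfl⟩
  have hTm : T.card ≤ m := hβ ▸ (card_univ (α := β) ▸ card_le_univ T)
  have hkey : (r : ℤ) * X.card ≤ (EXTc.card : ℤ) + r * T.card := by
    have hc := hcond X Tᶜ
    rw [← e5] at hc
    have hTc' : ((Tᶜ : Finset β).card : ℤ) = (m : ℤ) - T.card := by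
      rw [card_compl, hβ, Nat.cast_sub hTm]
    rw [hTc'] at hc
    linarith
  zify at h1 h2' e1 e2 e3 e4 ⊢
  linarith
end Gadget

theorem stmt_6 {α β : Type*} [Fintype α] [Fintype β] [DecidableEq α] [DecidableEq β]
    (m r : ℕ) (hα : Fintype.card α = m) (hβ : Fintype.card β = m)
    (G : α → β → Prop) [∀ a b, Decidable (G a b)] :
    (∃ H : α → β → Prop, (∀ a b, H a b → G a b) ∧
        (∀ a, {b | H a b}.ncard = r) ∧ (∀ b, {a | H a b}.ncard = r)) ↔
    (∀ (X : Finset α) (Y : Finset β),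
      (r : ℤ) * (X.card + Y.card - m) ≤
        ((X ×ˢ Y).filter (fun p => G p.1 p.2)).card) := by
  classical
  constructor
  · rintro ⟨H, hHG, hrow, hcol⟩ X Y
    have hrow' : ∀ a, (univ.filter (fun b => H a b)).card = r := by
      intro a
      rw [← hrow a]
      have : {b | H a b} = ↑(univ.filter (fun b => H a b)) := by ext b; simp
      rw [this, Set.ncard_coe_finset]
    have hcol' : ∀ b, (univ.filter (fun a => H a b)).card = r := by
      intro b
      rw [← hcol b]
      have : {a | H a b} = ↑(univ.filter (fun a => H a b)) := by ext a; simp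
      rw [this, Set.ncard_coe_finset]
    have hmono : ((X ×ˢ Y).filter (fun p => H p.1 p.2)).card
        ≤ ((X ×ˢ Y).filter (fun p => G p.1 p.2)).card :=
      card_le_card (monotone_filter_right _ (fun p _ hp => hHG p.1 p.2 hp))
    have hXfull : ((X ×ˢ (univ : Finset β)).filter (fun p => H p.1 p.2)).card = X.card * r := by
      rw [count_rows X univ H]
      rw [Finset.sum_congr rfl (fun a _ => hrow' a), sum_const, smul_eq_mul]
    have hsplit : ((X ×ˢ (univ : Finset β)).filter (fun p => H p.1 p.2)).card
        = ((X ×ˢ Y).filter (fun p => H p.1 p.2)).card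
          + ((X ×ˢ Yᶜ).filter (fun p => H p.1 p.2)).card := by
      rw [count_rows X univ H, count_rows X Y H, count_rows X Yᶜ H, ← sum_add_distrib]
      refine Finset.sum_congr rfl fun a _ => ?_
      rw [← card_union_of_disjoint (disjoint_filter_filter disjoint_compl_right),
        ← filter_union, union_compl]
    have hYc : ((X ×ˢ Yᶜ).filter (fun p => H p.1 p.2)).card ≤ (m - Y.card) * r := by
      rw [count_cols X Yᶜ H]
      calc ∑ b ∈ Yᶜ, (X.filter (fun a => H a b)).card
          ≤ ∑ b ∈ Yᶜ, (univ.filter (fun a => H a b)).card :=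
            Finset.sum_le_sum fun b _ => card_le_card (filter_subset_filter _ (subset_univ X))
        _ = Yᶜ.card * r := by
            rw [Finset.sum_congr rfl (fun b _ => hcol' b), sum_const, smul_eq_mul]
        _ = (m - Y.card) * r := by rw [card_compl, hβ]
    have hYm : Y.card ≤ m := hβ ▸ (card_univ (α := β) ▸ card_le_univ Y)
    have h1 : (X.card : ℤ) * r ≤ ((X ×ˢ Y).filter (fun p => H p.1 p.2)).card
        + ((m : ℤ) - Y.card) * r := by
      have := hsplit ▸ hXfull
      zify at this hYc
      rw [Nat.cast_sub hYm] at hYc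
      linarith
    calc (r : ℤ) * (X.card + Y.card - m)
        ≤ ((X ×ˢ Y).filter (fun p => H p.1 p.2)).card := by linarith
      _ ≤ _ := by exact_mod_cast hmono
  · intro hcond
    obtain ⟨f, hfinj, hfmem⟩ :=
      (Finset.all_card_le_biUnion_card_iff_existsInjective' (nbr r G)).1
        (hall_cond r G m hβ hcond)
    have hcard : Fintype.card ((α × Fin r) ⊕ {p : α × β // G p.1 p.2})
        = Fintype.card ((β × Fin r) ⊕ {p : α × β // G p.1 p.2}) := by
      simp [Fintype.card_sum, Fintype.card_prod, hα, hβ]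
    have hbij : Function.Bijective f :=
      (Fintype.bijective_iff_injective_and_card f).2 ⟨hfinj, hcard⟩
    have fact1 : ∀ (a : α) (i : Fin r), ∃ e : {p : α × β // G p.1 p.2},
        e.1.1 = a ∧ f (Sum.inl (a, i)) = Sum.inr e := by
      intro a i
      have h := hfmem (Sum.inl (a, i))
      simp only [nbr] at h
      obtain ⟨e, he, heq⟩ := mem_image.1 h
      exact ⟨e, (mem_filter.1 he).2, heq.symm⟩
    have fact2 : ∀ e : {p : α × β // G p.1 p.2},
        f (Sum.inr e) = Sum.inr e ∨ ∃ j : Fin r, f (Sum.inr e) = Sum.inl (e.1.2, j) := by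
      intro e
      have h := hfmem (Sum.inr e)
      simp only [nbr] at h
      rcases mem_insert.1 h with h | h
      · exact Or.inl h
      · obtain ⟨j, -, hj⟩ := mem_image.1 h
        exact Or.inr ⟨j, hj.symm⟩
    refine ⟨fun a b => ∃ h : G a b, (f (Sum.inr ⟨(a, b), h⟩)).isLeft = true,
      fun a b hb => hb.choose, ?_, ?_⟩
    · -- row degrees
      intro a
      set g : Fin r → β := fun i => ((fact1 a i).choose).1.2 with hgdef
      have hg : ∀ i, ((fact1 a i).choose).1.1 = a
          ∧ f (Sum.inl (a, i)) = Sum.inr ((fact1 a i).choose) := fun i => (fact1 a i).choose_spec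
      have hset : {b | ∃ h : G a b, (f (Sum.inr ⟨(a, b), h⟩)).isLeft = true}
          = ↑((univ : Finset (Fin r)).image g) := by
        ext b
        simp only [Set.mem_setOf_eq, coe_image, coe_univ, Set.image_univ, Set.mem_range]
        constructor
        · rintro ⟨h, hleft⟩
          obtain ⟨x, hx⟩ := hbij.2 (Sum.inr ⟨(a, b), h⟩)
          rcases x with ⟨a', i⟩ | e'
          · have h1 := (fact1 a' i).choose_spec
            have hce : (fact1 a' i).choose = ⟨(a, b), h⟩ :=
              Sum.inr_injective (h1.2.symm.trans hx)
            have ha' : a' = a := by rw [← h1.1, hce]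
            subst ha'
            exact ⟨i, by show ((fact1 a' i).choose).1.2 = b; rw [hce]⟩
          · rcases fact2 e' with h2 | ⟨j, h2⟩
            · have he' : e' = ⟨(a, b), h⟩ := Sum.inr_injective (h2.symm.trans hx)
              rw [he'] at h2
              rw [h2] at hleft
              simp at hleft
            · exact absurd (hx.symm.trans h2) (by simp)
        · rintro ⟨i, rfl⟩
          have h1 := (fact1 a i).choose_spec
          have hpe : ((fact1 a i).choose).1 = (a, g i) := Prod.ext h1.1 rfl
          have hG : G a (g i) := by have h2 := ((fact1 a i).choose).2; rw [hpe] at h2; exact h2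
          refine ⟨hG, ?_⟩
          have hee : (⟨(a, g i), hG⟩ : {p : α × β // G p.1 p.2}) = (fact1 a i).choose :=
            Subtype.ext hpe.symm
          rw [hee]
          rcases fact2 (fact1 a i).choose with h2 | ⟨j, h2⟩
          · exact absurd (hfinj (h1.2.trans h2.symm)) (by simp)
          · rw [h2]; rfl
      rw [hset, Set.ncard_coe_finset, card_image_of_injective _ ?ginj, card_univ,
        Fintype.card_fin]
      case ginj =>
        intro i i' hii
        have h1 := (fact1 a i).choose_spec
        have h1' := (fact1 a i').choose_spec
        have : (fact1 a i).choose = (fact1 a i').choose :=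
          Subtype.ext (Prod.ext (h1.1.trans h1'.1.symm) hii)
        have := hfinj (h1.2.trans (this ▸ h1'.2.symm))
        simpa using this
    · -- column degrees
      intro b
      have fact3 : ∀ j : Fin r, ∃ e : {p : α × β // G p.1 p.2},
          e.1.2 = b ∧ f (Sum.inr e) = Sum.inl (b, j) := by
        intro j
        obtain ⟨x, hx⟩ := hbij.2 (Sum.inl (b, j))
        rcases x with ⟨a', i⟩ | e
        · obtain ⟨e, -, he2⟩ := fact1 a' i
          rw [hx] at he2
          exact absurd he2 (by simp)
        · rcases fact2 e with h2 | ⟨j', h2⟩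
          · exact absurd (h2.symm.trans hx) (by simp)
          · have h3 := h2.symm.trans hx
            simp only [Sum.inl.injEq, Prod.mk.injEq] at h3
            exact ⟨e, h3.1, hx⟩
      set g' : Fin r → α := fun j => ((fact3 j).choose).1.1 with hg'def
      have hset : {a | ∃ h : G a b, (f (Sum.inr ⟨(a, b), h⟩)).isLeft = true}
          = ↑((univ : Finset (Fin r)).image g') := by
        ext a
        simp only [Set.mem_setOf_eq, coe_image, coe_univ, Set.image_univ, Set.mem_range]
        constructor
        · rintro ⟨h, hleft⟩
          rcases fact2 ⟨(a, b), h⟩ with h2 | ⟨j, h2⟩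
          · rw [h2] at hleft; simp at hleft
          · refine ⟨j, ?_⟩
            have h3 := (fact3 j).choose_spec
            have hch : (fact3 j).choose = ⟨(a, b), h⟩ :=
              Sum.inr_injective (hfinj (h3.2.trans h2.symm))
            show ((fact3 j).choose).1.1 = a
            rw [hch]
        · rintro ⟨j, rfl⟩
          have h3 := (fact3 j).choose_spec
          have hpe : ((fact3 j).choose).1 = (g' j, b) := Prod.ext rfl h3.1
          have hG : G (g' j) b := by
            have h2 := ((fact3 j).choose).2; rw [hpe] at h2; exact h2
          refine ⟨hG, ?_⟩
          have hee : (⟨(g' j, b), hG⟩ : {p : α × β // G p.1 p.2}) = (fact3 j).choose :=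
            Subtype.ext hpe.symm
          rw [hee, h3.2]; rfl
      rw [hset, Set.ncard_coe_finset, card_image_of_injective _ ?g'inj, card_univ,
        Fintype.card_fin]
      case g'inj =>
        intro j j' hjj
        have h3 := (fact3 j).choose_spec
        have h3' := (fact3 j').choose_spec
        have : (fact3 j).choose = (fact3 j').choose :=
          Subtype.ext (Prod.ext hjj (h3.1.trans h3'.1.symm))
        have := h3.2.symm.trans ((this ▸ h3'.2 : f (Sum.inr (fact3 j).choose) = Sum.inl (b, j')))
        simpa using this
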